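/- Let A be any linearly ordered set with at least 5 elements. Then there exist infinitely many non-equivalent monotone games over A; that is, there is a sequence H_0, H_1, H_2, … of monotone games over A such that for all m ≠ n, H_m is not equivalent to H_n. -/

import Mathlib

universe u

namespace SetTheory

/-- Pre-games (as in the older Mathlib's `SetTheory.PGame`, since removed from Mathlib). -/
inductive PGame : Type (u + 1)
  | mk : ∀ α β : Type u, (α → PGame) → (β → PGame) → PGame

/-- The pre-game `0 = { | }`, as in the older Mathlib. -/
instance PGame.instZero : Zero PGame :=
  ⟨⟨PEmpty, PEmpty, PEmpty.elim, PEmpty.elim⟩⟩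

end SetTheory

/-- Combinatorial games over a poset `A` of atoms: either an atomic game `[a]` for an atom
`a : A`, or a composite game `⟨L|R⟩` where `L` and `R` are nonempty families of games
(the left and right options). -/
inductive PoGame (A : Type u) : Type (u + 1) where
  | atom : A → PoGame A
  | mk : (xl xr : Type u) → (xl → PoGame A) → (xr → PoGame A) →
      Nonempty xl → Nonempty xr → PoGame A

namespace PoGame

variable {A : Type u}

/-- `G` is an atomic game. -/
def IsAtomic : PoGame A → Prop
  | atom _ => True
  | mk _ _ _ _ _ _ => False

/-- `G` is a left option of the game given as second argument. -/
def IsLeftOption (G : PoGame A) : PoGame A → Prop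
  | atom _ => False
  | mk _ _ L _ _ _ => ∃ i, L i = G

/-- `G` is a right option of the game given as second argument. -/
def IsRightOption (G : PoGame A) : PoGame A → Prop
  | atom _ => False
  | mk _ _ _ R _ _ => ∃ j, R j = G

section Order

variable [PartialOrder A]

mutual
  /-- `Le G H` is the relation `G ≤ H` on games over the poset `A`, defined by mutual
  recursion with `Lf` (the relation `G ⊲ H`): `G ≤ H` iff every left option `G^L`
  satisfies `G^L ⊲ H`, every right option `H^R` satisfies `G ⊲ H^R`, and if `G` or `H`
  is atomic then `G ⊲ H`. -/
  inductive Le : PoGame A → PoGame A → Prop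
    | intro (G H : PoGame A)
        (hL : ∀ G', IsLeftOption G' G → Lf G' H)
        (hR : ∀ H', IsRightOption H' H → Lf G H')
        (hA : IsAtomic G ∨ IsAtomic H → Lf G H) : Le G H

  /-- `Lf G H` is the relation `G ⊲ H` on games over the poset `A`: it holds iff some
  right option `G^R` satisfies `G^R ≤ H`, or some left option `H^L` satisfies `G ≤ H^L`,
  or `G = [a]` and `H = [b]` are atomic with `a ≤ b` in `A`. -/
  inductive Lf : PoGame A → PoGame A → Prop
    | rightOption (G H G' : PoGame A) (h : IsRightOption G' G) (hle : Le G' H) : Lf G H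
    | leftOption (G H H' : PoGame A) (h : IsLeftOption H' H) (hle : Le G H') : Lf G H
    | atom (a b : A) (hab : a ≤ b) : Lf (atom a) (atom b)
end

/-- Two games are equivalent if `G ≤ H` and `H ≤ G`. -/
def GEquiv (G H : PoGame A) : Prop := Le G H ∧ Le H G

/-- `G` is locally monotone if `G ≤ G^L` for every left option `G^L` and `G^R ≤ G` for
every right option `G^R`. -/
def LocallyMonotone (G : PoGame A) : Prop :=
  (∀ G', IsLeftOption G' G → Le G G') ∧ (∀ G', IsRightOption G' G → Le G' G)

/-- `G` is an option (left or right) of `H`. -/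
def IsOption (G H : PoGame A) : Prop := IsLeftOption G H ∨ IsRightOption G H

/-- `G` is a position of `H`: `H` itself, an option of `H`, an option of an option, etc. -/
def IsPosition (G H : PoGame A) : Prop := Relation.ReflTransGen IsOption G H

/-- `G` is monotone if every position of `G` is locally monotone. -/
def Monotone (G : PoGame A) : Prop := ∀ K, IsPosition K G → LocallyMonotone K

end Order

/-- The 5-element linearly ordered set `L5 = {-3, -2, -1, 0, 1}`. -/
abbrev L5 : Type := {a : ℤ // -3 ≤ a ∧ a ≤ 1}

/-- `G` has mean `C`: an atomic game `[a]` has mean `a`, and a composite game has mean `C`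
iff every left option has mean `C + 1` and every right option has mean `C - 1`. -/
def HasMean : PoGame L5 → ℤ → Prop
  | atom a, C => (a : ℤ) = C
  | mk _ _ L R _ _, C => (∀ i, HasMean (L i) (C + 1)) ∧ (∀ j, HasMean (R j) (C - 1))

/-- The game `⟨G | H⟩` with a single left option `G` and a single right option `H`. -/
def ofPair (G H : PoGame A) : PoGame A :=
  mk PUnit PUnit (fun _ => G) (fun _ => H) ⟨PUnit.unit⟩ ⟨PUnit.unit⟩

/-- `⋆ = ⟨-1 | -3⟩`. -/
def star : PoGame L5 := ofPair (atom ⟨-1, by norm_num⟩) (atom ⟨-3, by norm_num⟩)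

/-- `M(G) = ⟨1 | G⟩`. -/
def M (G : PoGame L5) : PoGame L5 := ofPair (atom ⟨1, by norm_num⟩) G

/-- `P(G) = ⟨G | -2⟩`. -/
def P (G : PoGame L5) : PoGame L5 := ofPair G (atom ⟨-2, by norm_num⟩)

/-- `P⋆(G) = ⟨G | ⋆⟩`. -/
def Pstar (G : PoGame L5) : PoGame L5 := ofPair G star

/-- `Pn n G = P G` if `n` is odd, `P⋆ G` if `n` is even. -/
def Pn (n : ℕ) (G : PoGame L5) : PoGame L5 := if Odd n then P G else Pstar G

/-- The sequence `G_0 = [0]`, `G_{n+1} = M (Pn n (G_n))`. -/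
def Gseq : ℕ → PoGame L5
  | 0 => atom ⟨0, by norm_num⟩
  | n + 1 => M (Pn n (Gseq n))

/-- The normal-play game obtained from a game over `L5` by replacing every atom by the
normal-play game `0 = { | }`, keeping the tree of left and right options. -/
def np : PoGame L5 → SetTheory.PGame.{0}
  | atom _ => 0
  | mk xl xr L R _ _ => SetTheory.PGame.mk xl xr (fun i => np (L i)) (fun j => np (R j))

end PoGame

/-!
The witnesses are the paper's games `G₀ = [0]`, `Gₙ₊₁ = ⟨1 | Pₙ(Gₙ)⟩` with `Pₙ(G) = ⟨G | Rₙ⟩`, where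
`Rₙ = [-2]` for odd `n` and `Rₙ = ⋆ = ⟨-1 | -3⟩` for even `n`. Only five atoms occur, so the games
transfer to `A` along any 5-chain. Monotonicity is a finite check of inequalities between these
positions. For `m < n`, unfolding `Gₙ ≤ Gₘ` eventually demands `Pₖ₊₁(Gₖ₊₁) ⊲ Rₖ` for some `k`, i.e.
either that `[-2]` and `⋆` be comparable or that `Gₖ₊₁ ⊲ [-1]`; all of these fail, and the
alternation of the parities is what makes the chain strict.
-/

namespace PoGame

section Options

variable {A : Type u}

@[simp] theorem not_isLeftOption_atom {K : PoGame A} {a : A} : ¬ IsLeftOption K (atom a) :=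
  id

@[simp] theorem not_isRightOption_atom {K : PoGame A} {a : A} : ¬ IsRightOption K (atom a) :=
  id

@[simp] theorem isLeftOption_ofPair {K G H : PoGame A} : IsLeftOption K (ofPair G H) ↔ K = G := by
  simp [IsLeftOption, ofPair, eq_comm]

@[simp] theorem isRightOption_ofPair {K G H : PoGame A} :
    IsRightOption K (ofPair G H) ↔ K = H := by
  simp [IsRightOption, ofPair, eq_comm]

@[simp] theorem isAtomic_atom {a : A} : IsAtomic (atom a : PoGame A) := trivial

@[simp] theorem not_isAtomic_ofPair {G H : PoGame A} : ¬ IsAtomic (ofPair G H) := id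

@[simp] theorem ofPair_ne_atom {G H : PoGame A} {a : A} : ofPair G H ≠ atom a := by
  simp [ofPair]

@[simp] theorem not_isOption_atom {K : PoGame A} {a : A} : ¬ IsOption K (atom a) := by
  simp [IsOption]

@[simp] theorem isOption_ofPair {K G H : PoGame A} : IsOption K (ofPair G H) ↔ K = G ∨ K = H := by
  simp [IsOption]

end Options

section Order

variable {A : Type u} [PartialOrder A]

theorem le_iff {G H : PoGame A} : Le G H ↔
    (∀ G', IsLeftOption G' G → Lf G' H) ∧ (∀ H', IsRightOption H' H → Lf G H') ∧
      (IsAtomic G ∨ IsAtomic H → Lf G H) :=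
  ⟨fun ⟨_, _, hL, hR, hA⟩ => ⟨hL, hR, hA⟩, fun ⟨hL, hR, hA⟩ => .intro _ _ hL hR hA⟩

theorem lf_iff {G H : PoGame A} : Lf G H ↔
    (∃ G', IsRightOption G' G ∧ Le G' H) ∨ (∃ H', IsLeftOption H' H ∧ Le G H') ∨
      ∃ a b, G = atom a ∧ H = atom b ∧ a ≤ b := by
  constructor
  · rintro (⟨_, _, G', h, hle⟩ | ⟨_, _, H', h, hle⟩ | ⟨a, b, hab⟩)
    exacts [.inl ⟨G', h, hle⟩, .inr (.inl ⟨H', h, hle⟩), .inr (.inr ⟨a, b, rfl, rfl, hab⟩)]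
  · rintro (⟨G', h, hle⟩ | ⟨H', h, hle⟩ | ⟨a, b, rfl, rfl, hab⟩)
    exacts [.rightOption _ _ _ h hle, .leftOption _ _ _ h hle, .atom a b hab]

theorem atom_lf_atom {a b : A} : Lf (atom a) (atom b) ↔ a ≤ b := by
  simp [lf_iff]

theorem ofPair_lf_atom {x y : PoGame A} {b : A} : Lf (ofPair x y) (atom b) ↔ Le y (atom b) := by
  simp [lf_iff]

theorem atom_lf_ofPair {a : A} {z w : PoGame A} : Lf (atom a) (ofPair z w) ↔ Le (atom a) z := by
  simp [lf_iff]

theorem ofPair_lf_ofPair {x y z w : PoGame A} :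
    Lf (ofPair x y) (ofPair z w) ↔ Le y (ofPair z w) ∨ Le (ofPair x y) z := by
  simp [lf_iff]

theorem atom_le_atom {a b : A} : Le (atom a) (atom b) ↔ a ≤ b := by
  simp [le_iff, atom_lf_atom]

theorem atom_le_ofPair {a : A} {z w : PoGame A} :
    Le (atom a) (ofPair z w) ↔ Lf (atom a) w ∧ Le (atom a) z := by
  simp [le_iff, atom_lf_ofPair]

theorem ofPair_le_atom {x y : PoGame A} {b : A} :
    Le (ofPair x y) (atom b) ↔ Lf x (atom b) ∧ Le y (atom b) := by
  simp [le_iff, ofPair_lf_atom]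

theorem ofPair_le_ofPair {x y z w : PoGame A} :
    Le (ofPair x y) (ofPair z w) ↔ Lf x (ofPair z w) ∧ Lf (ofPair x y) w := by
  simp [le_iff]

theorem lf_ofPair_of_le {K z w : PoGame A} (h : Le K z) : Lf K (ofPair z w) :=
  .leftOption _ _ z (by simp) h

theorem ofPair_lf_of_le {z w K : PoGame A} (h : Le w K) : Lf (ofPair z w) K :=
  .rightOption _ _ w (by simp) h

theorem LocallyMonotone.monotone {G : PoGame A} (h : LocallyMonotone G)
    (hopt : ∀ K, IsOption K G → PoGame.Monotone K) : PoGame.Monotone G := by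
  intro K hK
  rcases Relation.ReflTransGen.cases_tail hK with rfl | ⟨K', hKK', hK'G⟩
  exacts [h, hopt K' hK'G K hKK']

theorem monotone_atom {a : A} : PoGame.Monotone (atom a : PoGame A) :=
  LocallyMonotone.monotone ⟨by simp, by simp⟩ (by simp)

theorem monotone_ofPair {G H : PoGame A} (hG : PoGame.Monotone G) (hH : PoGame.Monotone H)
    (hle : Le (ofPair G H) G) (hge : Le H (ofPair G H)) : PoGame.Monotone (ofPair G H) := by
  refine LocallyMonotone.monotone ⟨?_, ?_⟩ ?_ <;> simp_all

end Order

section Chain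

variable {A : Type u} (v : Fin 5 → A)

/- With `v` renaming the atoms `-3 < -2 < -1 < 0 < 1` of `L5`, `chainStar`, `chainRight n`,
`chainP n` and `chain n` are `star`, the right option of `Pn n`, `Pn n (Gseq n)` and `Gseq n`. -/

def chainStar : PoGame A := ofPair (atom (v 2)) (atom (v 0))

def chainRight (n : ℕ) : PoGame A := if Odd n then atom (v 1) else chainStar v

def chain : ℕ → PoGame A
  | 0 => atom (v 3)
  | n + 1 => ofPair (atom (v 4)) (ofPair (chain n) (chainRight v n))

def chainP (n : ℕ) : PoGame A := ofPair (chain v n) (chainRight v n)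

theorem chain_zero : chain v 0 = atom (v 3) := rfl

theorem chain_succ (n : ℕ) : chain v (n + 1) = ofPair (atom (v 4)) (chainP v n) := rfl

variable {v}

theorem chainRight_of_odd {n : ℕ} (hn : Odd n) : chainRight v n = atom (v 1) := if_pos hn

theorem chainRight_of_even {n : ℕ} (hn : Even n) : chainRight v n = chainStar v :=
  if_neg (Nat.not_odd_iff_even.2 hn)

end Chain

section Monotone

variable {A : Type u} [PartialOrder A] {v : Fin 5 → A} (hv : _root_.Monotone v)
include hv

theorem chainRight_le_atom {b : A} (hb : v 2 ≤ b) (n : ℕ) : Le (chainRight v n) (atom b) := by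
  rcases Nat.even_or_odd n with hn | hn
  · rw [chainRight_of_even hn, chainStar, ofPair_le_atom, atom_lf_atom, atom_le_atom]
    exact ⟨hb, (hv (by decide)).trans hb⟩
  · rw [chainRight_of_odd hn, atom_le_atom]
    exact (hv (by decide)).trans hb

theorem chainP_le_atom {b : A} (hb : v 3 ≤ b) (n : ℕ) : Le (chainP v n) (atom b) := by
  have hb2 : v 2 ≤ b := (hv (by decide)).trans hb
  induction n with
  | zero => exact ofPair_le_atom.2 ⟨atom_lf_atom.2 hb, chainRight_le_atom hv hb2 0⟩
  | succ n ih =>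
    refine ofPair_le_atom.2 ⟨?_, chainRight_le_atom hv hb2 _⟩
    rw [chain_succ, ofPair_lf_atom]
    exact ih

theorem chain_le_atom {b : A} (hb : v 4 ≤ b) (n : ℕ) : Le (chain v n) (atom b) := by
  cases n with
  | zero => exact atom_le_atom.2 ((hv (by decide)).trans hb)
  | succ n =>
    rw [chain_succ, ofPair_le_atom, atom_lf_atom]
    exact ⟨hb, chainP_le_atom hv ((hv (by decide)).trans hb) n⟩

theorem atom_le_chain {a : A} (ha : a ≤ v 3) (n : ℕ) : Le (atom a) (chain v n) := by
  induction n with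
  | zero => exact atom_le_atom.2 ha
  | succ n ih =>
    rw [chain_succ, atom_le_ofPair, chainP, atom_lf_ofPair, atom_le_atom]
    exact ⟨ih, ha.trans (hv (by decide))⟩

theorem chainRight_lf_chainRight (m n : ℕ) : Lf (chainRight v m) (chainRight v n) := by
  rcases Nat.even_or_odd m with hm | hm <;> rcases Nat.even_or_odd n with hn | hn <;>
    simp only [chainRight_of_even, chainRight_of_odd, chainStar, hm, hn, atom_lf_atom,
      ofPair_lf_atom, atom_lf_ofPair, ofPair_lf_ofPair, atom_le_atom]
  · exact .inr (ofPair_le_atom.2 ⟨atom_lf_atom.2 le_rfl, atom_le_atom.2 (hv (by decide))⟩)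
  · exact hv (by decide)
  · exact hv (by decide)
  · exact le_rfl

theorem chainRight_le_chainP (m n : ℕ) : Le (chainRight v m) (chainP v n) := by
  have hlf := chainRight_lf_chainRight hv m n
  rcases Nat.even_or_odd m with hm | hm
  · rw [chainRight_of_even hm, chainStar] at hlf ⊢
    rw [chainP, ofPair_le_ofPair, atom_lf_ofPair]
    exact ⟨atom_le_chain hv (hv (by decide)) n, hlf⟩
  · rw [chainRight_of_odd hm] at hlf ⊢
    rw [chainP, atom_le_ofPair]
    exact ⟨hlf, atom_le_chain hv (hv (by decide)) n⟩

theorem chainP_le_chain (n : ℕ) : Le (chainP v n) (chain v n) := by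
  cases n with
  | zero => exact chainP_le_atom hv le_rfl 0
  | succ n =>
    rw [chainP, chain_succ, ofPair_le_ofPair]
    exact ⟨lf_ofPair_of_le (chain_le_atom hv le_rfl (n + 1)),
      ofPair_lf_of_le (chainRight_le_chainP hv (n + 1) n)⟩

theorem chainP_le_chain_succ (n : ℕ) : Le (chainP v n) (chain v (n + 1)) := by
  rw [chain_succ, chainP, ofPair_le_ofPair]
  exact ⟨lf_ofPair_of_le (chain_le_atom hv le_rfl n),
    lf_ofPair_of_le (chainP_le_chain hv n)⟩

theorem monotone_chainRight (n : ℕ) : PoGame.Monotone (chainRight v n) := by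
  rcases Nat.even_or_odd n with hn | hn
  · rw [chainRight_of_even hn]
    refine monotone_ofPair monotone_atom monotone_atom ?_ ?_
    · exact ofPair_le_atom.2 ⟨atom_lf_atom.2 le_rfl, atom_le_atom.2 (hv (by decide))⟩
    · exact atom_le_ofPair.2 ⟨atom_lf_atom.2 le_rfl, atom_le_atom.2 (hv (by decide))⟩
  · rw [chainRight_of_odd hn]
    exact monotone_atom

theorem monotone_chain (n : ℕ) : PoGame.Monotone (chain v n) := by
  induction n with
  | zero => exact monotone_atom
  | succ n ih =>
    have hP : PoGame.Monotone (chainP v n) :=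
      monotone_ofPair ih (monotone_chainRight hv n) (chainP_le_chain hv n)
        (chainRight_le_chainP hv n n)
    exact monotone_ofPair monotone_atom hP (chain_le_atom hv le_rfl (n + 1))
      (chainP_le_chain_succ hv n)

end Monotone

section Strict

variable {A : Type u} [PartialOrder A] {v : Fin 5 → A} (hv : StrictMono v)
include hv

theorem not_chainStar_le_atom : ¬ Le (chainStar v) (atom (v 1)) := by
  rw [chainStar, ofPair_le_atom, atom_lf_atom]
  exact fun h => (hv (by decide : (1 : Fin 5) < 2)).not_ge h.1

theorem not_atom_le_chainStar : ¬ Le (atom (v 1)) (chainStar v) := by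
  rw [chainStar, atom_le_ofPair, atom_lf_atom]
  exact fun h => (hv (by decide : (0 : Fin 5) < 1)).not_ge h.1

theorem not_chain_lf_atom (n : ℕ) : ¬ Lf (chain v n) (atom (v 2)) := by
  induction n with
  | zero => exact atom_lf_atom.not.2 (hv (by decide : (2 : Fin 5) < 3)).not_ge
  | succ n ih =>
    rw [chain_succ, ofPair_lf_atom, chainP, ofPair_le_atom]
    exact fun h => ih h.1

theorem not_chainP_succ_lf_chainRight (k : ℕ) : ¬ Lf (chainP v (k + 1)) (chainRight v k) := by
  rcases Nat.even_or_odd k with hk | hk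
  · rw [chainRight_of_even hk, chainP, chainRight_of_odd hk.add_one, chainStar, ofPair_lf_ofPair]
    rintro (h | h)
    · exact not_atom_le_chainStar hv h
    · exact not_chain_lf_atom hv (k + 1) (ofPair_le_atom.1 h).1
  · rw [chainRight_of_odd hk, chainP, chainRight_of_even hk.add_one, ofPair_lf_atom]
    exact not_chainStar_le_atom hv

theorem not_chain_le_chain_of_chainP {n : ℕ}
    (hP : ∀ j < n, ∀ i < j, ¬ Le (chainP v j) (chainP v i)) {m : ℕ} (hmn : m < n) :
    ¬ Le (chain v n) (chain v m) := by
  obtain ⟨p, rfl⟩ : ∃ p, n = p + 1 := ⟨n - 1, by omega⟩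
  induction m with
  | zero =>
    rw [chain_succ, chain_zero, ofPair_le_atom, atom_lf_atom]
    exact fun h => (hv (by decide : (3 : Fin 5) < 4)).not_ge h.1
  | succ k ih =>
    rw [chain_succ, chain_succ, ofPair_le_ofPair, chainP, ofPair_lf_ofPair]
    rintro ⟨-, h | h⟩
    · exact hP p (by omega) k (by omega) h
    · exact ih (by omega) h

theorem not_chainP_le_chainP {k n : ℕ} (hkn : k < n) : ¬ Le (chainP v n) (chainP v k) := by
  induction n using Nat.strong_induction_on generalizing k with
  | _ n ih =>
    rw [chainP, chainP, ofPair_le_ofPair]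
    rintro ⟨hG, hR⟩
    by_cases hadj : n = k + 1
    · subst hadj
      exact not_chainP_succ_lf_chainRight hv k hR
    obtain ⟨p, rfl⟩ : ∃ p, n = p + 1 := ⟨n - 1, by omega⟩
    rw [chain_succ, ofPair_lf_ofPair] at hG
    rcases hG with h | h
    · exact ih p (by omega) (by omega) h
    · exact not_chain_le_chain_of_chainP hv (fun j hj i hij => ih j hj hij) (by omega) h

theorem not_chain_le_chain {m n : ℕ} (hmn : m < n) : ¬ Le (chain v n) (chain v m) :=
  not_chain_le_chain_of_chainP hv (fun _ _ _ hij => not_chainP_le_chainP hv hij) hmn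

end Strict

end PoGame

theorem exists_strictMono_of_injective {A : Type*} [LinearOrder A] {n : ℕ} {f : Fin n → A}
    (hf : Function.Injective f) : ∃ v : Fin n → A, StrictMono v := by
  classical
  have hcard : (Finset.univ.image f).card = n := by
    rw [Finset.card_image_of_injective _ hf, Finset.card_univ, Fintype.card_fin]
  exact ⟨_, ((Finset.univ.image f).orderEmbOfFin hcard).strictMono⟩

open PoGame in
/-- For any linearly ordered set `A` with at least 5 elements, there exist infinitely many
non-equivalent monotone games over `A`. -/
theorem stmt_16 (A : Type u) [LinearOrder A] (f : Fin 5 → A) (hf : Function.Injective f) :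
    ∃ H : ℕ → PoGame A, (∀ n, PoGame.Monotone (H n)) ∧
      ∀ m n : ℕ, m ≠ n → ¬ GEquiv (H m) (H n) := by
  obtain ⟨v, hv⟩ := exists_strictMono_of_injective hf
  refine ⟨chain v, monotone_chain hv.monotone, fun m n hmn h => ?_⟩
  rcases hmn.lt_or_gt with hlt | hlt
  · exact not_chain_le_chain hv hlt h.2
  · exact not_chain_le_chain hv hlt h.1
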